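/- arXiv:2209.11603 — 2 statements merged into one kernel-verified Lean document; each statement's English description precedes it below -/
import Mathlib

section
/- Let V, Q be real vector spaces, m and n symmetric positive semidefinite bilinear forms on V and Q defining E(v,q) := m(v,v) + n(q,q), b : V × Q → ℝ bilinear, and r : V × V → ℝ a bilinear form with r(v,v) ≥ 0 for all v. Suppose u : ℝ → V and p : ℝ → Q are differentiable and satisfy for all t: m(u'(t), v) + b(v, p(t)) + r(u(t), v) = 0 for all v ∈ V, and n(p'(t), q) − b(u(t), q) = 0 for all q ∈ Q. Then t ↦ E(u(t), p(t)) is nonincreasing; if moreover r = 0, then E(u(t), p(t)) = E(u(0), p(0)) for all t ≥ 0. -/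
/-!
Testing the first equation with `v = u t` and the second with `q = p t` and adding, the coupling
terms `b (u t) (p t)` cancel; by symmetry of `m` and `n` this says that the energy has derivative
`-2 r(u t, u t) ≤ 0`, and the mean value theorem does the rest.
-/

theorem ContinuousLinearMap.hasDerivAt_of_bilinear_diag {𝕜 E : Type*}
    [NontriviallyNormedField 𝕜] [NormedAddCommGroup E] [NormedSpace 𝕜 E]
    {B : E →L[𝕜] E →L[𝕜] 𝕜} (hB : ∀ x y, B x y = B y x) {x : 𝕜 → E} {x' : E} {t : 𝕜}
    (hx : HasDerivAt x x' t) :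
    HasDerivAt (fun s ↦ B (x s) (x s)) (2 * B x' (x t)) t := by
  refine (B.hasDerivAt_of_bilinear (fun _ ↦ hx) (fun _ ↦ hx)).congr_deriv ?_
  rw [hB (x t) x']
  ring

section MixedSystem

variable {V Q : Type*} [NormedAddCommGroup V] [NormedSpace ℝ V]
    [NormedAddCommGroup Q] [NormedSpace ℝ Q]
    {m : V →L[ℝ] V →L[ℝ] ℝ} {n : Q →L[ℝ] Q →L[ℝ] ℝ}
    {b : V →L[ℝ] Q →L[ℝ] ℝ} {r : V →L[ℝ] V →L[ℝ] ℝ}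
    {u : ℝ → V} {p : ℝ → Q} {u' : V} {p' : Q} {t : ℝ}

theorem hasDerivAt_energy_of_mixed_system
    (hmsym : ∀ x y : V, m x y = m y x) (hnsym : ∀ x y : Q, n x y = n y x)
    (hu : HasDerivAt u u' t) (hp : HasDerivAt p p' t)
    (heq1 : ∀ v : V, m u' v + b v (p t) + r (u t) v = 0)
    (heq2 : ∀ q : Q, n p' q - b (u t) q = 0) :
    HasDerivAt (fun s ↦ m (u s) (u s) + n (p s) (p s)) (-2 * r (u t) (u t)) t := by
  refine ((m.hasDerivAt_of_bilinear_diag hmsym hu).add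
    (n.hasDerivAt_of_bilinear_diag hnsym hp)).congr_deriv ?_
  linarith [heq1 (u t), heq2 (p t)]

end MixedSystem

theorem semidiscrete_energy_law_general
    {V Q : Type*} [NormedAddCommGroup V] [NormedSpace ℝ V]
    [NormedAddCommGroup Q] [NormedSpace ℝ Q]
    (m : V →L[ℝ] V →L[ℝ] ℝ) (n : Q →L[ℝ] Q →L[ℝ] ℝ)
    (b : V →L[ℝ] Q →L[ℝ] ℝ) (r : V →L[ℝ] V →L[ℝ] ℝ)
    (hmsym : ∀ x y : V, m x y = m y x)
    (hnsym : ∀ x y : Q, n x y = n y x)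
    (hrpos : ∀ v : V, 0 ≤ r v v)
    (E : V → Q → ℝ)
    (hE : ∀ v q, E v q = m v v + n q q)
    (u : ℝ → V) (p : ℝ → Q) (u' : ℝ → V) (p' : ℝ → Q)
    (hu : ∀ t, HasDerivAt u (u' t) t)
    (hp : ∀ t, HasDerivAt p (p' t) t)
    (heq1 : ∀ t, ∀ v : V, m (u' t) v + b v (p t) + r (u t) v = 0)
    (heq2 : ∀ t, ∀ q : Q, n (p' t) q - b (u t) q = 0) :
    (∀ s t : ℝ, s ≤ t → E (u t) (p t) ≤ E (u s) (p s))
    ∧ (r = 0 → ∀ t : ℝ, 0 ≤ t → E (u t) (p t) = E (u 0) (p 0)) := by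
  have hE_eq : (fun t ↦ E (u t) (p t)) = fun t ↦ m (u t) (u t) + n (p t) (p t) :=
    funext fun t ↦ hE _ _
  have hderiv : ∀ t, HasDerivAt (fun t ↦ E (u t) (p t)) (-2 * r (u t) (u t)) t := fun t ↦
    hE_eq ▸ hasDerivAt_energy_of_mixed_system hmsym hnsym (hu t) (hp t) (heq1 t) (heq2 t)
  refine ⟨fun s t hst ↦ ?_, fun hr t _ ↦ ?_⟩
  · refine antitone_of_hasDerivAt_nonpos hderiv (fun t ↦ ?_) hst
    simpa using hrpos (u t)
  · subst hr
    refine is_const_of_deriv_eq_zero (fun t ↦ (hderiv t).differentiableAt) (fun t ↦ ?_) t 0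
    simp [(hderiv t).deriv]

/-- Semi-discrete energy law for the mixed wave system. -/
theorem semidiscrete_energy_law
    {V Q : Type*} [NormedAddCommGroup V] [NormedSpace ℝ V]
    [NormedAddCommGroup Q] [NormedSpace ℝ Q]
    (m : V →L[ℝ] V →L[ℝ] ℝ) (n : Q →L[ℝ] Q →L[ℝ] ℝ)
    (b : V →L[ℝ] Q →L[ℝ] ℝ) (r : V →L[ℝ] V →L[ℝ] ℝ)
    (hmsym : ∀ x y : V, m x y = m y x)
    (hnsym : ∀ x y : Q, n x y = n y x)
    (hmpos : ∀ v : V, 0 ≤ m v v)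
    (hnpos : ∀ q : Q, 0 ≤ n q q)
    (hrpos : ∀ v : V, 0 ≤ r v v)
    (E : V → Q → ℝ)
    (hE : ∀ v q, E v q = m v v + n q q)
    (u : ℝ → V) (p : ℝ → Q) (u' : ℝ → V) (p' : ℝ → Q)
    (hu : ∀ t, HasDerivAt u (u' t) t)
    (hp : ∀ t, HasDerivAt p (p' t) t)
    (heq1 : ∀ t, ∀ v : V, m (u' t) v + b v (p t) + r (u t) v = 0)
    (heq2 : ∀ t, ∀ q : Q, n (p' t) q - b (u t) q = 0) :
    (∀ s t : ℝ, s ≤ t → E (u t) (p t) ≤ E (u s) (p s))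
    ∧ (r = 0 → ∀ t : ℝ, 0 ≤ t → E (u t) (p t) = E (u 0) (p 0)) :=
  semidiscrete_energy_law_general m n b r hmsym hnsym hrpos E hE u p u' p' hu hp heq1 heq2
end

section
/- Let V, Q be real vector spaces, n symmetric positive semidefinite bilinear form on Q, m symmetric bilinear form on V with m(v,v) ≥ 0, b : V × Q → ℝ bilinear, F : ℝ → Q* with n-dual bound |F(t)(q)| ≤ g(t)·√(n(q,q)) for an integrable g ≥ 0. If u, p are differentiable with m(u',v) + b(v,p) = 0 for all v and n(p',q) − b(u,q) = F(t)(q) for all q, and E(t) := √(m(u(t),u(t)) + n(p(t),p(t))), then for all t ∈ [0,T], E(t) ≤ E(0) + ∫₀ᵗ g(s) ds. -/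
/-!
Testing the first equation with `u` and the second with `p` makes the coupling terms `b(u, p)`
cancel, so the squared energy `m(u, u) + n(p, p)` has derivative `2 F(p) ≤ 2 g √(n(p, p)) ≤ 2 g E`.
Hence `E' ≤ g` wherever `E ≠ 0`; to avoid the singularity of the square root at `0` one integrates
`(E² + ε²)' / (2 √(E² + ε²)) ≤ g` instead and lets `ε → 0`.
-/

open Set MeasureTheory

theorem HasDerivAt.bilin_apply_self_of_symm {𝕜 V : Type*} [NontriviallyNormedField 𝕜]
    [NormedAddCommGroup V] [NormedSpace 𝕜 V] (m : V →L[𝕜] V →L[𝕜] 𝕜)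
    (hm : ∀ x y : V, m x y = m y x) {u : 𝕜 → V} {u' : V} {t : 𝕜} (hu : HasDerivAt u u' t) :
    HasDerivAt (fun r => m (u r) (u r)) (2 * m u' (u t)) t := by
  refine ((m.hasFDerivAt.comp_hasDerivAt t hu).clm_apply hu).congr_deriv ?_
  rw [Function.comp_apply, hm (u t) u', two_mul]

theorem sqrt_le_sqrt_add_integral_of_hasDerivAt_le {φ φ' g : ℝ → ℝ} {a b : ℝ} (hab : a ≤ b)
    (hφ : ∀ x ∈ Icc a b, 0 ≤ φ x) (hcont : ContinuousOn φ (Icc a b))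
    (hderiv : ∀ x ∈ Ioo a b, HasDerivAt φ (φ' x) x) (hg : ∀ x ∈ Ioo a b, 0 ≤ g x)
    (hgint : IntegrableOn g (Icc a b))
    (hbound : ∀ x ∈ Ioo a b, φ' x ≤ 2 * g x * √(φ x)) :
    √(φ b) ≤ √(φ a) + ∫ x in a..b, g x := by
  refine le_of_forall_pos_le_add fun ε hε => ?_
  have hpos : ∀ x ∈ Icc a b, 0 < φ x + ε ^ 2 := fun x hx => by positivity [hφ x hx]
  have hreg : √(φ b + ε ^ 2) - √(φ a + ε ^ 2) ≤ ∫ x in a..b, g x := by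
    refine intervalIntegral.sub_le_integral_of_hasDeriv_right_of_le hab
      (g' := fun x => φ' x / (2 * √(φ x + ε ^ 2)))
      ((hcont.add continuousOn_const).sqrt) (fun x hx => ?_) hgint (fun x hx => ?_)
    · have hx' := Ioo_subset_Icc_self hx
      exact (((hderiv x hx).add_const _).sqrt (hpos x hx').ne').hasDerivWithinAt
    · have hx' := Ioo_subset_Icc_self hx
      rw [div_le_iff₀ (by positivity [hpos x hx'])]
      calc φ' x ≤ 2 * g x * √(φ x) := hbound x hx
        _ ≤ 2 * g x * √(φ x + ε ^ 2) := by
          gcongr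
          · linarith [hg x hx]
          · exact le_add_of_nonneg_right (sq_nonneg ε)
        _ = g x * (2 * √(φ x + ε ^ 2)) := by ring
  have hb : √(φ b) ≤ √(φ b + ε ^ 2) := Real.sqrt_le_sqrt (le_add_of_nonneg_right (sq_nonneg ε))
  have ha : √(φ a + ε ^ 2) ≤ √(φ a) + ε := by
    rw [Real.sqrt_le_iff]
    have hsq := Real.sq_sqrt (hφ a (left_mem_Icc.2 hab))
    exact ⟨by positivity, by nlinarith [Real.sqrt_nonneg (φ a)]⟩
  linarith

theorem mixed_wave_stability_general
    {V Q : Type*} [NormedAddCommGroup V] [NormedSpace ℝ V]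
    [NormedAddCommGroup Q] [NormedSpace ℝ Q]
    (m : V →L[ℝ] V →L[ℝ] ℝ) (n : Q →L[ℝ] Q →L[ℝ] ℝ)
    (b : V →L[ℝ] Q →L[ℝ] ℝ)
    (hmsym : ∀ x y : V, m x y = m y x)
    (hnsym : ∀ x y : Q, n x y = n y x)
    (hmpos : ∀ v : V, 0 ≤ m v v)
    (hnpos : ∀ q : Q, 0 ≤ n q q)
    (T : ℝ)
    (F : ℝ → Q →L[ℝ] ℝ) (g : ℝ → ℝ)
    (hg : ∀ t, 0 ≤ g t)
    (hgint : IntervalIntegrable g MeasureTheory.volume 0 T)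
    (hF : ∀ t, ∀ q : Q, |F t q| ≤ g t * Real.sqrt (n q q))
    (u : ℝ → V) (p : ℝ → Q) (u' : ℝ → V) (p' : ℝ → Q)
    (hu : ∀ t, HasDerivAt u (u' t) t)
    (hp : ∀ t, HasDerivAt p (p' t) t)
    (heq1 : ∀ t, ∀ v : V, m (u' t) v + b v (p t) = 0)
    (heq2 : ∀ t, ∀ q : Q, n (p' t) q - b (u t) q = F t q)
    (E : ℝ → ℝ)
    (hE : ∀ t, E t = Real.sqrt (m (u t) (u t) + n (p t) (p t))) :
    ∀ t ∈ Set.Icc (0:ℝ) T, E t ≤ E 0 + ∫ s in (0:ℝ)..t, g s := by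
  intro t ht
  set φ : ℝ → ℝ := fun s => m (u s) (u s) + n (p s) (p s)
  have hderiv : ∀ s, HasDerivAt φ (2 * F s (p s)) s := fun s => by
    have henergy : m (u' s) (u s) + n (p' s) (p s) = F s (p s) := by
      linarith [heq1 s (u s), heq2 s (p s)]
    refine (((hu s).bilin_apply_self_of_symm m hmsym).add
      ((hp s).bilin_apply_self_of_symm n hnsym)).congr_deriv ?_
    rw [← henergy]
    ring
  have hbound : ∀ s, 2 * F s (p s) ≤ 2 * g s * √(φ s) := fun s => by
    calc 2 * F s (p s) ≤ 2 * (g s * √(n (p s) (p s))) := by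
          linarith [le_abs_self (F s (p s)), hF s (p s)]
      _ ≤ 2 * (g s * √(φ s)) := by
          gcongr
          · exact hg s
          · exact le_add_of_nonneg_left (hmpos _)
      _ = 2 * g s * √(φ s) := by ring
  have hgint' : IntegrableOn g (Icc 0 t) :=
    (intervalIntegrable_iff_integrableOn_Icc_of_le ht.1).1
      (hgint.mono_set (uIcc_subset_uIcc_left (Icc_subset_uIcc ht)))
  simpa only [hE] using sqrt_le_sqrt_add_integral_of_hasDerivAt_le ht.1
    (fun s _ => add_nonneg (hmpos _) (hnpos _))
    (fun s _ => (hderiv s).continuousAt.continuousWithinAt) (fun s _ => hderiv s)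
    (fun s _ => hg s) hgint' (fun s _ => hbound s)

/-- Abstract stability estimate for the mixed wave system with source term. -/
theorem mixed_wave_stability
    {V Q : Type*} [NormedAddCommGroup V] [NormedSpace ℝ V]
    [NormedAddCommGroup Q] [NormedSpace ℝ Q]
    (m : V →L[ℝ] V →L[ℝ] ℝ) (n : Q →L[ℝ] Q →L[ℝ] ℝ)
    (b : V →L[ℝ] Q →L[ℝ] ℝ)
    (hmsym : ∀ x y : V, m x y = m y x)
    (hnsym : ∀ x y : Q, n x y = n y x)
    (hmpos : ∀ v : V, 0 ≤ m v v)
    (hnpos : ∀ q : Q, 0 ≤ n q q)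
    (T : ℝ) (hT : 0 ≤ T)
    (F : ℝ → Q →L[ℝ] ℝ) (g : ℝ → ℝ)
    (hg : ∀ t, 0 ≤ g t)
    (hgint : IntervalIntegrable g MeasureTheory.volume 0 T)
    (hF : ∀ t, ∀ q : Q, |F t q| ≤ g t * Real.sqrt (n q q))
    (u : ℝ → V) (p : ℝ → Q) (u' : ℝ → V) (p' : ℝ → Q)
    (hu : ∀ t, HasDerivAt u (u' t) t)
    (hp : ∀ t, HasDerivAt p (p' t) t)
    (heq1 : ∀ t, ∀ v : V, m (u' t) v + b v (p t) = 0)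
    (heq2 : ∀ t, ∀ q : Q, n (p' t) q - b (u t) q = F t q)
    (E : ℝ → ℝ)
    (hE : ∀ t, E t = Real.sqrt (m (u t) (u t) + n (p t) (p t))) :
    ∀ t ∈ Set.Icc (0:ℝ) T, E t ≤ E 0 + ∫ s in (0:ℝ)..t, g s :=
  mixed_wave_stability_general m n b hmsym hnsym hmpos hnpos T F g hg hgint hF u p u' p' hu hp heq1
    heq2 E hE
end
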